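/- arXiv:2204.12115 — 5 statements merged into one kernel-verified Lean document; each statement's English description precedes it below -/
import Mathlib

section
/- (Parallel parity constraints, Theorem 1) Let p > q ≥ 0, and let β_q ∈ GF(2)^{2^p} be the concatenation of 2^{p−q} blocks β^{(1)},…,β^{(2^{p−q})} each of length 2^q. Define β_p = β_q · (F^{⊗(p−q)} ⊗ I_{2^q}) over GF(2). Then for each k ∈ {1,…,2^q}, the XOR of β_p[(j−1)·2^q + k] over j = 1,…,2^{p−q} equals β^{(1)}[k], the k-th bit of the first (leftmost) block. -/
open Matrix Kronecker Finset

def polarF : Matrix (Fin 2) (Fin 2) (ZMod 2) := !![1, 0; 1, 1]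

/-- The `m`-fold Kronecker power `F^{⊗ m}`, with indices identified with `Fin (2^m)`
(first Kronecker factor = most significant bit, as usual). -/
def kronPowF : (m : ℕ) → Matrix (Fin (2 ^ m)) (Fin (2 ^ m)) (ZMod 2)
  | 0 => 1
  | m + 1 =>
      Matrix.reindex (finProdFinEquiv.trans (finCongr (pow_succ 2 m).symm))
        (finProdFinEquiv.trans (finCongr (pow_succ 2 m).symm)) (kronPowF m ⊗ₖ polarF)

/-- For `q ≤ p`, the identification of a block index `j ∈ Fin (2^(p-q))` together with a
within-block position `k ∈ Fin (2^q)` with the coordinate `j * 2^q + k` of a length-`2^p`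
vector (`0`-based; this is position `(j-1)·2^q + k` in the `1`-based notation of the paper). -/
def segEquiv (p q : ℕ) (h : q ≤ p) : Fin (2 ^ (p - q)) × Fin (2 ^ q) ≃ Fin (2 ^ p) :=
  finProdFinEquiv.trans (finCongr (by rw [← pow_add, Nat.sub_add_cancel h]))

/-- The encoding matrix `F^{⊗(p-q)} ⊗ I_{2^q}`, acting on `GF(2)^{2^p}`. -/
def encMat (p q : ℕ) (h : q ≤ p) : Matrix (Fin (2 ^ p)) (Fin (2 ^ p)) (ZMod 2) :=
  Matrix.reindex (segEquiv p q h) (segEquiv p q h)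
    (kronPowF (p - q) ⊗ₖ (1 : Matrix (Fin (2 ^ q)) (Fin (2 ^ q)) (ZMod 2)))

/-! The row sums of `F = [[1,0],[1,1]]` over `GF(2)` are `(1, 0)`, hence the row sums of
`F^{⊗m}` are the first unit vector. Summing the `k`-th coordinates of the blocks of
`β_q · (F^{⊗(p−q)} ⊗ I)` therefore pairs the `k`-th coordinates of the blocks of `β_q` with the
row sums of `F^{⊗(p−q)}`, which keeps only the first block. -/

section

variable {R l m n o : Type*}

theorem reindex_mulVec_one [NonAssocSemiring R] [Fintype n] [Fintype o] (e : m ≃ l) (f : n ≃ o)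
    (M : Matrix m n R) : reindex e f M *ᵥ 1 = (M *ᵥ 1) ∘ e.symm := by
  rw [reindex_apply, submatrix_mulVec_equiv]
  rfl

theorem vecMul_reindex [NonUnitalNonAssocSemiring R] [Fintype l] [Fintype m] (e : m ≃ l)
    (f : n ≃ o) (M : Matrix m n R) (v : l → R) :
    v ᵥ* reindex e f M = ((v ∘ e) ᵥ* M) ∘ f.symm := by
  rw [reindex_apply, submatrix_vecMul_equiv, Equiv.symm_symm]

theorem kronecker_mulVec_one [CommSemiring R] [Fintype m] [Fintype n] (A : Matrix l m R)
    (B : Matrix o n R) : (A ⊗ₖ B) *ᵥ 1 = fun x => (A *ᵥ 1) x.1 * (B *ᵥ 1) x.2 := by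
  ext x
  simp only [mulVec, dotProduct_one, kroneckerMap_apply, Fintype.sum_prod_type,
    Finset.sum_mul_sum]

theorem single_mul_single_comp_symm [MulZeroOneClass R] [DecidableEq l] [DecidableEq m]
    [DecidableEq n] (e : l × m ≃ n) (a : l) (b : m) :
    (fun x => (Pi.single a 1 : l → R) x.1 * (Pi.single b 1 : m → R) x.2) ∘ e.symm =
      Pi.single (e (a, b)) 1 := by
  ext i
  obtain ⟨⟨x, y⟩, rfl⟩ := e.surjective i
  by_cases hx : x = a <;> by_cases hy : y = b <;> simp [Pi.single_apply, hx, hy]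

theorem sum_vecMul_kronecker_one_apply [CommSemiring R] [Fintype l] [Fintype m] [Fintype n]
    [DecidableEq m] [DecidableEq n] (A : Matrix m l R) {i₀ : m} (hA : A *ᵥ 1 = Pi.single i₀ 1)
    (v : m × n → R) (k : n) :
    ∑ j, (v ᵥ* (A ⊗ₖ (1 : Matrix n n R))) (j, k) = v (i₀, k) := by
  have hcol : ∀ j, (v ᵥ* (A ⊗ₖ (1 : Matrix n n R))) (j, k) = ((fun i => v (i, k)) ᵥ* A) j := by
    intro j
    simp [vecMul, dotProduct, Fintype.sum_prod_type, one_apply]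
  simp_rw [hcol]
  rw [← dotProduct_one, ← dotProduct_mulVec, hA, dotProduct_single, mul_one]

end

theorem polarF_mulVec_one : polarF *ᵥ 1 = Pi.single 0 1 := by
  ext i
  fin_cases i <;> decide

theorem kronPowF_mulVec_one : ∀ m : ℕ, kronPowF m *ᵥ 1 = Pi.single 0 1
  | 0 => by
    ext i
    fin_cases i
    simp [kronPowF]
  | m + 1 => by
    rw [kronPowF, reindex_mulVec_one, kronecker_mulVec_one, kronPowF_mulVec_one m,
      polarF_mulVec_one, single_mul_single_comp_symm]
    rfl

/-- **Theorem 1, parallel parity constraints.** Let `p > q ≥ 0` and let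
`β_q ∈ GF(2)^{2^p}` (viewed as the concatenation of `2^{p-q}` blocks of length `2^q`, block `j`
of a vector `v` being `fun k => v (segEquiv p q _ (j, k))`). Put `β_p = β_q · (F^{⊗(p−q)} ⊗ I_{2^q})`.
Then for each `k ∈ Fin (2^q)`, the XOR of `β_p[(j−1)·2^q + k]` over all blocks `j` equals the
`k`-th bit of the first (leftmost) block of `β_q`. -/
theorem parallel_parity_constraints (p q : ℕ) (hpq : q < p) (βq : Fin (2 ^ p) → ZMod 2)
    (βp : Fin (2 ^ p) → ZMod 2) (hβp : βp = βq ᵥ* encMat p q hpq.le) (k : Fin (2 ^ q)) :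
    ∑ j : Fin (2 ^ (p - q)), βp (segEquiv p q hpq.le (j, k)) =
      βq (segEquiv p q hpq.le (⟨0, by positivity⟩, k)) := by
  have hblocks : βp ∘ segEquiv p q hpq.le =
      (βq ∘ segEquiv p q hpq.le) ᵥ* (kronPowF (p - q) ⊗ₖ 1) := by
    rw [hβp, encMat, vecMul_reindex, Function.comp_assoc, Equiv.symm_comp_self,
      Function.comp_id]
  calc ∑ j, βp (segEquiv p q hpq.le (j, k))
      = ∑ j, ((βq ∘ segEquiv p q hpq.le) ᵥ* (kronPowF (p - q) ⊗ₖ 1)) (j, k) := by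
        simp only [← hblocks, Function.comp_apply]
    _ = βq (segEquiv p q hpq.le (0, k)) :=
        sum_vecMul_kronecker_one_apply _ (kronPowF_mulVec_one _) _ _
end

section
/- (Segmental parity constraints, Theorem 2) Let p > r ≥ 0, and let β_r ∈ GF(2)^{2^p} be the concatenation of 2^{p−r} blocks of length 2^r each, and set β_p = β_r · (F^{⊗(p−r)} ⊗ I_{2^r}) over GF(2). If the second block β^{(2)} of β_r satisfies the single-parity-check constraint ⊕_{k=1}^{2^r} β^{(2)}[k] = 0, then ⊕_{j=1}^{2^{p−r−1}} ⊕_{k=1}^{2^r} β_p[(2j−1)·2^r + k] = 0. -/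
open Matrix Kronecker Finset

/-- For `1 ≤ m`, the (`0`-based) block index `2*j + 1 ∈ Fin (2^m)`, i.e. the `1`-based block
index `2j - 1` for `j = (j : ℕ) + 1`, of an odd-indexed segment. -/
def oddBlock (m : ℕ) (hm : 1 ≤ m) (j : Fin (2 ^ (m - 1))) : Fin (2 ^ m) :=
  ⟨2 * (j : ℕ) + 1, by
    have h2 : 2 ^ (m - 1) * 2 = 2 ^ m := by rw [← pow_succ]; congr 1; omega
    have := j.isLt; omega⟩

section BlockKronecker

variable {R α β γ ι : Type*} [CommSemiring R] [Fintype α] [Fintype β] [Fintype γ] [DecidableEq β]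

theorem vecMul_reindex_kronecker_one_apply (e : α × β ≃ γ) (A : Matrix α α R) (v : γ → R)
    (b : α) (k : β) :
    (v ᵥ* reindex e e (A ⊗ₖ (1 : Matrix β β R))) (e (b, k)) = ∑ b', v (e (b', k)) * A b' b := by
  simp [vecMul, dotProduct, ← e.sum_comp, Fintype.sum_prod_type, one_apply]

theorem sum_blocks_vecMul_reindex_kronecker_one [Fintype ι] (e : α × β ≃ γ) (A : Matrix α α R)
    (v : γ → R) (c : ι → α) :
    ∑ j, ∑ k, (v ᵥ* reindex e e (A ⊗ₖ (1 : Matrix β β R))) (e (c j, k)) =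
      ∑ b', (∑ k, v (e (b', k))) * ∑ j, A b' (c j) := by
  simp only [vecMul_reindex_kronecker_one_apply, Finset.sum_mul_sum]
  rw [Finset.sum_comm_cycle]
  exact Finset.sum_congr rfl fun _ _ => Finset.sum_comm

end BlockKronecker

/-- The index identification in the definition of `kronPowF (m + 1)`. -/
def appendBitEquiv (m : ℕ) : Fin (2 ^ m) × Fin 2 ≃ Fin (2 ^ (m + 1)) :=
  finProdFinEquiv.trans (finCongr (pow_succ 2 m).symm)

theorem appendBitEquiv_val (m : ℕ) (b : Fin (2 ^ m) × Fin 2) :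
    (appendBitEquiv m b : ℕ) = b.2 + 2 * b.1 :=
  finProdFinEquiv_apply_val b

theorem appendBitEquiv_eq_zero_iff (m : ℕ) (b : Fin (2 ^ m) × Fin 2) :
    appendBitEquiv m b = 0 ↔ b.1 = 0 ∧ b.2 = 0 := by
  simp only [Fin.ext_iff, appendBitEquiv_val, Fin.val_zero]
  omega

theorem kronPowF_succ_apply (m : ℕ) (b c : Fin (2 ^ m) × Fin 2) :
    kronPowF (m + 1) (appendBitEquiv m b) (appendBitEquiv m c) =
      kronPowF m b.1 c.1 * polarF b.2 c.2 := by
  simp [kronPowF, appendBitEquiv, reindex_apply]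

theorem sum_polarF_row (i : Fin 2) : ∑ j, polarF i j = if i = 0 then 1 else 0 := by
  fin_cases i <;> decide

theorem polarF_apply_one (i : Fin 2) : polarF i 1 = if i = 1 then 1 else 0 := by
  fin_cases i <;> rfl

theorem sum_kronPowF_row (m : ℕ) (b : Fin (2 ^ m)) :
    ∑ c, kronPowF m b c = if b = 0 then 1 else 0 := by
  induction m with
  | zero =>
    obtain rfl : b = 0 := Fin.ext (Nat.lt_one_iff.mp (by simp))
    simp [kronPowF]
  | succ m ih =>
    obtain ⟨b, rfl⟩ := (appendBitEquiv m).surjective b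
    rw [← (appendBitEquiv m).sum_comp, Fintype.sum_prod_type]
    simp only [kronPowF_succ_apply, ← Finset.sum_mul_sum, ih, sum_polarF_row,
      ite_zero_mul_ite_zero, mul_one, appendBitEquiv_eq_zero_iff]

theorem sum_kronPowF_oddBlock (m : ℕ) (hm : 1 ≤ m) (b : Fin (2 ^ m)) :
    ∑ j, kronPowF m b (oddBlock m hm j) = if (b : ℕ) = 1 then 1 else 0 := by
  obtain ⟨m, rfl⟩ : ∃ m', m = m' + 1 := ⟨m - 1, by omega⟩
  obtain ⟨b, rfl⟩ := (appendBitEquiv m).surjective b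
  have hodd (j : Fin (2 ^ m)) : oddBlock (m + 1) hm j = appendBitEquiv m (j, 1) := by
    ext
    simp only [oddBlock, appendBitEquiv_val]
    omega
  change ∑ j : Fin (2 ^ m), _ = _
  simp only [hodd, kronPowF_succ_apply, ← Finset.sum_mul, sum_kronPowF_row, polarF_apply_one,
    ite_zero_mul_ite_zero, mul_one, appendBitEquiv_val]
  refine if_congr ?_ rfl rfl
  simp only [Fin.ext_iff, Fin.val_zero, Fin.val_one]
  omega

/-- **Theorem 2, segmental parity constraint.** Let `p > r ≥ 0`, let
`β_r ∈ GF(2)^{2^p}` be a concatenation of `2^{p-r}` blocks of length `2^r`, and let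
`β_p = β_r · (F^{⊗(p−r)} ⊗ I_{2^r})`. If the second block of `β_r` satisfies the
single-parity-check constraint (its bits XOR to `0`), then
`⊕_{j=1}^{2^{p−r−1}} ⊕_{k=1}^{2^r} β_p[(2j−1)·2^r + k] = 0`. -/
theorem segmental_parity_constraint (p r : ℕ) (hpr : r < p) (βr : Fin (2 ^ p) → ZMod 2)
    (βp : Fin (2 ^ p) → ZMod 2) (hβp : βp = βr ᵥ* encMat p r hpr.le)
    (hspc : ∑ k : Fin (2 ^ r),
      βr (segEquiv p r hpr.le (⟨1, Nat.one_lt_two_pow_iff.mpr (by omega)⟩, k)) = 0) :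
    ∑ j : Fin (2 ^ (p - r - 1)), ∑ k : Fin (2 ^ r),
      βp (segEquiv p r hpr.le (oddBlock (p - r) (by omega) j, k)) = 0 := by
  subst hβp
  rw [encMat, sum_blocks_vecMul_reindex_kronecker_one]
  simp only [sum_kronPowF_oddBlock, mul_ite, mul_one, mul_zero]
  rw [Fintype.sum_eq_single ⟨1, Nat.one_lt_two_pow_iff.mpr (by omega)⟩
    fun b hb => if_neg fun h => hb (Fin.ext h)]
  exact (if_pos rfl).trans hspc
end

section
/- (Lemma 3) With the same definitions as Lemma 2, if {k₁,k₂} with k₁,k₂ ∈ {1,…,2^{m−1}} is feasible for γ' ∈ {0,1}^{m−1}, and γ ∈ {0,1}^m extends γ' with γ[m] = 1, then both {k₁ + 2^{m−1}, k₂} and {k₁, k₂ + 2^{m−1}} are feasible pairs for γ inside {1,…,2^m}. -/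
/-- `InSeg t k`: the (`1`-based) segment index `k` belongs to the involvement set `I_t`,
i.e. the bit of weight `2^{t−1}` in the binary expansion of `k − 1` equals `1`. -/
def InSeg (t k : ℕ) : Prop := (k - 1).testBit (t - 1) = true

/-- A pair `{k₁, k₂}` of (`1`-based) segment indices is *feasible* for the check vector
`γ ∈ {0,1}^m` if, for every `t ∈ {1, …, m}`, exactly one of `k₁, k₂` lies in `I_t`
precisely when `γ[t] = 1` (here `γ t` for `t : Fin m` is the `1`-based entry `γ[t+1]`). -/
def FeasiblePair (m : ℕ) (γ : Fin m → Bool) (k₁ k₂ : ℕ) : Prop :=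
  ∀ t : Fin m, (Xor' (InSeg ((t : ℕ) + 1) k₁) (InSeg ((t : ℕ) + 1) k₂) ↔ γ t = true)

/-! For `1 ≤ k ≤ 2^n`, adding `2^n` to `k` sets bit `n` of `k - 1` and leaves the lower bits
alone. So shifting one member of a feasible pair by `2^n` changes nothing on the first `n`
coordinates, and on the new one puts exactly one member of the pair in `I_{n+1}`. -/

theorem FeasiblePair.symm {m : ℕ} {γ : Fin m → Bool} {a b : ℕ} (h : FeasiblePair m γ a b) :
    FeasiblePair m γ b a :=
  fun t => (xor_comm _ _).to_iff.trans (h t)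

theorem inSeg_add_two_pow_iff {n t a : ℕ} (ha : 1 ≤ a) (ht : t < n) :
    InSeg (t + 1) (a + 2 ^ n) ↔ InSeg (t + 1) a := by
  rw [InSeg, InSeg, Nat.add_sub_cancel, Nat.sub_add_comm ha, add_comm,
    Nat.testBit_two_pow_add_gt ht]

theorem inSeg_add_two_pow_self {n a : ℕ} (ha : 1 ≤ a) (ha' : a ≤ 2 ^ n) :
    InSeg (n + 1) (a + 2 ^ n) := by
  rw [InSeg, Nat.add_sub_cancel, Nat.sub_add_comm ha, add_comm, Nat.testBit_two_pow_add_eq,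
    Nat.testBit_lt_two_pow (show a - 1 < 2 ^ n by omega), Bool.not_false]

theorem not_inSeg_of_le_two_pow {n b : ℕ} (hb : b ≤ 2 ^ n) : ¬ InSeg (n + 1) b := by
  have hpos := Nat.two_pow_pos n
  simp only [InSeg, Nat.add_sub_cancel, Nat.testBit_lt_two_pow (show b - 1 < 2 ^ n by omega),
    Bool.false_eq_true, not_false_eq_true]

theorem FeasiblePair.add_two_pow_left {n : ℕ} {γ' : Fin n → Bool} {γ : Fin (n + 1) → Bool}
    (hext : ∀ t : Fin n, γ t.castSucc = γ' t) (hlast : γ (Fin.last n) = true) {a b : ℕ}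
    (ha : 1 ≤ a) (ha' : a ≤ 2 ^ n) (hb' : b ≤ 2 ^ n) (h : FeasiblePair n γ' a b) :
    FeasiblePair (n + 1) γ (a + 2 ^ n) b := by
  intro t
  cases t using Fin.lastCases with
  | last =>
    rw [Fin.val_last, hlast]
    exact iff_of_true (.inl ⟨inSeg_add_two_pow_self ha ha', not_inSeg_of_le_two_pow hb'⟩) rfl
  | cast t =>
    rw [Fin.val_castSucc, inSeg_add_two_pow_iff ha t.isLt, hext]
    exact h t

theorem FeasiblePair.add_two_pow_right {n : ℕ} {γ' : Fin n → Bool} {γ : Fin (n + 1) → Bool}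
    (hext : ∀ t : Fin n, γ t.castSucc = γ' t) (hlast : γ (Fin.last n) = true) {a b : ℕ}
    (ha' : a ≤ 2 ^ n) (hb : 1 ≤ b) (hb' : b ≤ 2 ^ n) (h : FeasiblePair n γ' a b) :
    FeasiblePair (n + 1) γ a (b + 2 ^ n) :=
  (h.symm.add_two_pow_left hext hlast hb hb' ha').symm

/-- **Lemma 3.** If `{k₁, k₂} ⊆ {1, …, 2^{m−1}}` is feasible for
`γ' ∈ {0,1}^{m−1}` and `γ ∈ {0,1}^m` extends `γ'` with `γ[m] = 1`, then both
`{k₁ + 2^{m−1}, k₂}` and `{k₁, k₂ + 2^{m−1}}` are feasible for `γ` inside `{1, …, 2^m}`. -/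
theorem feasible_extend_odd (m : ℕ) (hm : 1 ≤ m) (γ' : Fin (m - 1) → Bool)
    (γ : Fin m → Bool) (hext : ∀ t : Fin (m - 1), γ (Fin.castLE (by omega) t) = γ' t)
    (hlast : γ ⟨m - 1, by omega⟩ = true) (k₁ k₂ : ℕ)
    (hk₁ : 1 ≤ k₁) (hk₁' : k₁ ≤ 2 ^ (m - 1)) (hk₂ : 1 ≤ k₂) (hk₂' : k₂ ≤ 2 ^ (m - 1))
    (hfeas : FeasiblePair (m - 1) γ' k₁ k₂) :
    FeasiblePair m γ (k₁ + 2 ^ (m - 1)) k₂ ∧ FeasiblePair m γ k₁ (k₂ + 2 ^ (m - 1)) := by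
  obtain ⟨n, rfl⟩ : ∃ n, m = n + 1 := ⟨m - 1, by omega⟩
  -- `n + 1 - 1` is definitionally `n`, so the hypotheses already have the shape used above.
  exact ⟨hfeas.add_two_pow_left hext hlast hk₁ hk₁' hk₂',
    hfeas.add_two_pow_right hext hlast hk₁' hk₂ hk₂'⟩
end

section
/- Let β ∈ GF(2)^{2^p} be partitioned into 2^{p−q} consecutive segments of length 2^q each, and for t ∈ {1,…,p−q} define the t-th S-PC check γ[t] = ⊕_{j=1}^{2^{p−q−t}} ⊕_{k=(2j−1)2^{t−1}+1}^{j·2^t} ⊕_{m=1}^{2^q} β_seg(k)[m], where β_seg(k) is the k-th segment. If β' is obtained from β by flipping one bit in segment k₁ and one bit in segment k₂, then for each t the t-th S-PC check of β' equals γ[t] XOR (|{k₁,k₂} ∩ I_t| mod 2), where I_t = {k : bit 2^{t−1} of k−1 is 1}. -/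
open Finset

instance (t k : ℕ) : Decidable (InSeg t k) := by unfold InSeg; infer_instance

/-- The `t`-th segmental parity check of a vector `β ∈ GF(2)^{2^p}` (given as a function on
`1`-based positions, partitioned into `2^{p−q}` consecutive segments of length `2^q`, so that
the `m`-th bit of segment `k` is `β ((k−1)·2^q + m)`):
`γ[t] = ⊕_{j=1}^{2^{p−q−t}} ⊕_{k=(2j−1)·2^{t−1}+1}^{j·2^t} ⊕_{m=1}^{2^q} β_seg(k)[m]`. -/
def spcCheck (p q : ℕ) (β : ℕ → ZMod 2) (t : ℕ) : ZMod 2 :=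
  ∑ j ∈ Finset.Icc 1 (2 ^ (p - q - t)),
    ∑ k ∈ Finset.Icc ((2 * j - 1) * 2 ^ (t - 1) + 1) (j * 2 ^ t),
      ∑ m ∈ Finset.Icc 1 (2 ^ q), β ((k - 1) * 2 ^ q + m)

/-! The check is additive in `β`, so it suffices to flip a single bit, at position `m` of
segment `k`. Such a bit is counted by the `t`-th check once for every block
`[(2j−1)·2^{t−1}+1, j·2^t]` containing `k`, i.e. for every `j` with `(k−1) / 2^{t−1} = 2j−1`.
There is exactly one such `j` when this quotient is odd, i.e. when bit `t−1` of `k−1` is set,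
and none otherwise. -/

theorem Nat.mul_add_eq_mul_add_iff {N a b m m' : ℕ} (hm : 1 ≤ m) (hmN : m ≤ N) (hm' : 1 ≤ m')
    (hm'N : m' ≤ N) : a * N + m = b * N + m' ↔ a = b ∧ m = m' := by
  refine ⟨fun h => ?_, fun ⟨hab, hmm⟩ => hab ▸ hmm ▸ rfl⟩
  obtain rfl : a = b := by
    by_contra hne
    rcases Nat.lt_or_gt_of_ne hne with hlt | hlt <;> nlinarith
  exact ⟨rfl, by omega⟩

theorem sum_Icc_ite_mul_add_eq {M : Type*} [AddCommMonoid M] (x : M) {N a b m : ℕ} (hm : 1 ≤ m)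
    (hmN : m ≤ N) : ∑ m' ∈ Icc 1 N, (if a * N + m' = b * N + m then x else 0) =
      if a = b then x else 0 := by
  have hsplit : ∀ m' ∈ Icc 1 N, (if a * N + m' = b * N + m then x else 0) =
      if a = b then (if m' = m then x else 0) else 0 := fun m' hm' => by
    rw [mem_Icc] at hm'
    simp only [Nat.mul_add_eq_mul_add_iff hm'.1 hm'.2 hm hmN, ite_and]
  rw [sum_congr rfl hsplit, sum_ite_irrel, sum_ite_eq', if_pos (mem_Icc.mpr ⟨hm, hmN⟩),
    sum_const_zero]

theorem sum_Icc_ite_eq_two_mul_sub_one {M : Type*} [AddCommMonoid M] (x : M) {d n : ℕ}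
    (hd : d < 2 * n) :
    ∑ j ∈ Icc 1 n, (if d = 2 * j - 1 then x else 0) = if d % 2 = 1 then x else 0 := by
  split_ifs with hodd
  · have hmem : (d + 1) / 2 ∈ Icc 1 n := mem_Icc.mpr ⟨by omega, by omega⟩
    rw [sum_eq_single_of_mem _ hmem fun j _ hj => if_neg (by omega), if_pos (by omega)]
  · exact sum_eq_zero fun j hj => if_neg (by rw [mem_Icc] at hj; omega)

theorem mem_Icc_block_iff {j k t : ℕ} (hj : 1 ≤ j) (hk : 1 ≤ k) (ht : 1 ≤ t) :
    k ∈ Icc ((2 * j - 1) * 2 ^ (t - 1) + 1) (j * 2 ^ t) ↔ (k - 1) / 2 ^ (t - 1) = 2 * j - 1 := by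
  have hblock : j * 2 ^ t = (2 * j - 1) * 2 ^ (t - 1) + 2 ^ (t - 1) := by
    obtain ⟨i, rfl⟩ : ∃ i, j = i + 1 := ⟨j - 1, by omega⟩
    obtain ⟨s, rfl⟩ : ∃ s, t = s + 1 := ⟨t - 1, by omega⟩
    simp only [Nat.add_sub_cancel, pow_succ, show 2 * (i + 1) - 1 = 2 * i + 1 by omega]
    ring
  rw [mem_Icc, Nat.div_eq_iff (by positivity), hblock]
  have := Nat.one_le_two_pow (n := t - 1)
  omega

theorem inSeg_iff {t k : ℕ} : InSeg t k ↔ (k - 1) / 2 ^ (t - 1) % 2 = 1 := by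
  simp [InSeg, Nat.testBit_eq_decide_div_mod_eq]

theorem spcCheck_add (p q : ℕ) (β γ : ℕ → ZMod 2) (t : ℕ) :
    spcCheck p q (β + γ) t = spcCheck p q β t + spcCheck p q γ t := by
  simp only [spcCheck, Pi.add_apply, sum_add_distrib]

theorem spcCheck_single {p q t k m : ℕ} (ht : 1 ≤ t) (ht' : t ≤ p - q) (hk : 1 ≤ k)
    (hk' : k ≤ 2 ^ (p - q)) (hm : 1 ≤ m) (hm' : m ≤ 2 ^ q) :
    spcCheck p q (fun i => if i = (k - 1) * 2 ^ q + m then 1 else 0) t =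
      if InSeg t k then 1 else 0 := by
  have hblock : ∀ j ∈ Icc 1 (2 ^ (p - q - t)),
      (∑ k' ∈ Icc ((2 * j - 1) * 2 ^ (t - 1) + 1) (j * 2 ^ t), ∑ m' ∈ Icc 1 (2 ^ q),
        if (k' - 1) * 2 ^ q + m' = (k - 1) * 2 ^ q + m then (1 : ZMod 2) else 0) =
          if (k - 1) / 2 ^ (t - 1) = 2 * j - 1 then 1 else 0 := by
    intro j hj
    calc _ = ∑ k' ∈ Icc ((2 * j - 1) * 2 ^ (t - 1) + 1) (j * 2 ^ t),
          if k = k' then (1 : ZMod 2) else 0 := sum_congr rfl fun k' hk' => by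
            rw [sum_Icc_ite_mul_add_eq _ hm hm']
            exact if_congr (by rw [mem_Icc] at hk'; omega) rfl rfl
      _ = _ := by rw [sum_ite_eq, if_congr (mem_Icc_block_iff (mem_Icc.mp hj).1 hk ht) rfl rfl]
  have hlt : (k - 1) / 2 ^ (t - 1) < 2 * 2 ^ (p - q - t) := by
    rw [Nat.div_lt_iff_lt_mul (by positivity), ← pow_succ', ← pow_add,
      show p - q - t + 1 + (t - 1) = p - q by omega]
    omega
  rw [spcCheck, sum_congr rfl hblock, sum_Icc_ite_eq_two_mul_sub_one _ hlt]
  exact if_congr inSeg_iff.symm rfl rfl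

theorem spcCheck_pairFlip_general (p q : ℕ) (β β' : ℕ → ZMod 2) (k₁ k₂ m₁ m₂ : ℕ)
    (hk₁ : 1 ≤ k₁) (hk₁' : k₁ ≤ 2 ^ (p - q)) (hk₂ : 1 ≤ k₂) (hk₂' : k₂ ≤ 2 ^ (p - q))
    (hm₁ : 1 ≤ m₁) (hm₁' : m₁ ≤ 2 ^ q) (hm₂ : 1 ≤ m₂) (hm₂' : m₂ ≤ 2 ^ q)
    (hβ' : ∀ i, β' i = β i + (if i = (k₁ - 1) * 2 ^ q + m₁ then 1 else 0) +
      (if i = (k₂ - 1) * 2 ^ q + m₂ then 1 else 0)) :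
    ∀ t, 1 ≤ t → t ≤ p - q →
      spcCheck p q β' t =
        spcCheck p q β t + ((if InSeg t k₁ then 1 else 0) + (if InSeg t k₂ then 1 else 0)) := by
  intro t ht ht'
  have hflip : β' = β + (fun i => if i = (k₁ - 1) * 2 ^ q + m₁ then 1 else 0) +
      (fun i => if i = (k₂ - 1) * 2 ^ q + m₂ then 1 else 0) := funext hβ'
  rw [hflip, spcCheck_add, spcCheck_add, spcCheck_single ht ht' hk₁ hk₁' hm₁ hm₁',
    spcCheck_single ht ht' hk₂ hk₂' hm₂ hm₂', add_assoc]

/-- If `β'` is obtained from `β` by flipping one bit in segment `k₁` (at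
within-segment position `m₁`) and one bit in segment `k₂` (at position `m₂`), with `k₁ ≠ k₂`,
then for each `t ∈ {1, …, p−q}` the `t`-th segmental parity check of `β'` equals
`γ[t] XOR (|{k₁, k₂} ∩ I_t| mod 2)`. -/
theorem spcCheck_pairFlip (p q : ℕ) (hpq : q < p) (β β' : ℕ → ZMod 2) (k₁ k₂ m₁ m₂ : ℕ)
    (hk₁ : 1 ≤ k₁) (hk₁' : k₁ ≤ 2 ^ (p - q)) (hk₂ : 1 ≤ k₂) (hk₂' : k₂ ≤ 2 ^ (p - q))
    (hne : k₁ ≠ k₂) (hm₁ : 1 ≤ m₁) (hm₁' : m₁ ≤ 2 ^ q) (hm₂ : 1 ≤ m₂) (hm₂' : m₂ ≤ 2 ^ q)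
    (hβ' : ∀ i, β' i = β i + (if i = (k₁ - 1) * 2 ^ q + m₁ then 1 else 0) +
      (if i = (k₂ - 1) * 2 ^ q + m₂ then 1 else 0)) :
    ∀ t, 1 ≤ t → t ≤ p - q →
      spcCheck p q β' t =
        spcCheck p q β t + ((if InSeg t k₁ then 1 else 0) + (if InSeg t k₂ then 1 else 0)) :=
  spcCheck_pairFlip_general p q β β' k₁ k₂ m₁ m₂ hk₁ hk₁' hk₂ hk₂' hm₁ hm₁' hm₂ hm₂' hβ'
end

section
/- For any m ≥ 1 and any nonzero γ ∈ {0,1}^m, the set of feasible pairs produced by the recursive splitting construction (base case: pairs {k, k+2^{m'−1}} when γ = (0,…,0,1) restricted to its leading nonzero block; splitting per Lemmas 2–4) coincides exactly with the set {{k₁,k₂} : (k₁−1) XOR (k₂−1) = Σ_t γ[t]·2^{t−1}}; hence every pair generated by Algorithm 2 satisfies all segmental parity check requirements encoded by γ. -/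
/-- The flipping set generated by the recursive splitting construction of Algorithm 2:
base case (order `1`, and the check vector `(0, …, 0, 1)` per Lemma 1), and splitting of the
flipping set of the order-`(m−1)` node according to the last check (Lemmas 2 and 3). Pairs are
recorded as ordered pairs of (`1`-based) segment indices. -/
def flipSet : (m : ℕ) → (Fin m → Bool) → Finset (ℕ × ℕ)
  | 0, _ => ∅
  | 1, γ => if γ 0 = true then {(1, 2)} else ∅
  | m + 2, γ =>
    if (∀ t : Fin (m + 1), γ t.castSucc = false) ∧ γ (Fin.last (m + 1)) = true then
      (Finset.Icc 1 (2 ^ (m + 1))).image fun k => (k, k + 2 ^ (m + 1))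
    else
      let Fp := flipSet (m + 1) fun t => γ t.castSucc
      if γ (Fin.last (m + 1)) = true then
        Fp.image (fun e => (e.1 + 2 ^ (m + 1), e.2)) ∪
          Fp.image (fun e => (e.1, e.2 + 2 ^ (m + 1)))
      else
        Fp ∪ Fp.image fun e => (e.1 + 2 ^ (m + 1), e.2 + 2 ^ (m + 1))

/-!
Write `x = k - 1` for the `0`-based position of a segment. The recursion reads the last check
`γ[m]` as the top bit of `x`: when it is `0`, a pair either stays in the lower half of
`{0, …, 2^m - 1}` or is shifted as a whole into the upper half, and when it is `1`, exactly one
of its two points is shifted up. Hence, by induction on `m`, `flipSet m γ` lists, up to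
orientation, exactly the pairs with `x₁ XOR x₂ = Σ_t γ[t] 2^t`; bit `t` of that equation is the
parity check `t`.
-/

namespace Nat

variable {n x y : ℕ}

theorem add_two_pow_eq_xor (hx : x < 2 ^ n) : x + 2 ^ n = x ^^^ 2 ^ n := by
  rw [← Nat.div_add_mod (x ^^^ 2 ^ n) (2 ^ n), xor_div_two_pow, xor_mod_two_pow,
    Nat.div_eq_of_lt hx, Nat.mod_eq_of_lt hx, Nat.div_self (Nat.two_pow_pos n), Nat.mod_self]
  simp [Nat.add_comm]

theorem add_two_pow_xor (hx : x < 2 ^ n) (hy : y < 2 ^ n) :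
    (x + 2 ^ n) ^^^ y = (x ^^^ y) + 2 ^ n := by
  rw [add_two_pow_eq_xor hx, add_two_pow_eq_xor (xor_lt_two_pow hx hy), Nat.xor_assoc,
    Nat.xor_comm (2 ^ n), ← Nat.xor_assoc]

theorem xor_add_two_pow (hx : x < 2 ^ n) (hy : y < 2 ^ n) :
    x ^^^ (y + 2 ^ n) = (x ^^^ y) + 2 ^ n := by
  rw [Nat.xor_comm, add_two_pow_xor hy hx, Nat.xor_comm]

theorem add_two_pow_xor_add_two_pow (hx : x < 2 ^ n) (hy : y < 2 ^ n) :
    (x + 2 ^ n) ^^^ (y + 2 ^ n) = x ^^^ y := by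
  rw [add_two_pow_eq_xor hx, add_two_pow_eq_xor hy, Nat.xor_assoc, Nat.xor_comm y,
    xor_cancel_left]

theorem lt_two_pow_or_exists_eq_add (hx : x < 2 ^ (n + 1)) :
    x < 2 ^ n ∨ ∃ y < 2 ^ n, x = y + 2 ^ n := by
  rw [Nat.pow_succ] at hx
  by_cases h : x < 2 ^ n
  · exact Or.inl h
  · exact Or.inr ⟨x - 2 ^ n, by omega, by omega⟩

end Nat

section ofBits

variable {m : ℕ}

def ofBits (γ : Fin m → Bool) : ℕ := ∑ t : Fin m, if γ t then 2 ^ (t : ℕ) else 0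

theorem ofBits_succ (γ : Fin (m + 1) → Bool) :
    ofBits γ = 2 ^ m * (γ (Fin.last m)).toNat + ofBits (Fin.init γ) := by
  rw [ofBits, ofBits, Fin.sum_univ_castSucc, Nat.add_comm]
  congr 1
  cases γ (Fin.last m) <;> simp

theorem ofBits_lt (γ : Fin m → Bool) : ofBits γ < 2 ^ m := by
  induction m with
  | zero => simp [ofBits]
  | succ m ih =>
    have := ih (Fin.init γ)
    rw [ofBits_succ, Nat.pow_succ]
    cases γ (Fin.last m) <;> simp <;> omega

theorem ofBits_eq_zero_iff {γ : Fin m → Bool} : ofBits γ = 0 ↔ ∀ t, γ t = false := by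
  simp [ofBits, Finset.sum_eq_zero_iff]

theorem testBit_ofBits (γ : Fin m → Bool) (t : Fin m) : (ofBits γ).testBit t = γ t := by
  induction m with
  | zero => exact t.elim0
  | succ m ih =>
    rw [ofBits_succ, Nat.testBit_two_pow_mul_add _ (ofBits_lt _)]
    induction t using Fin.lastCases with
    | last => cases γ (Fin.last m) <;> simp
    | cast i => simp [ih, Fin.init]

end ofBits

/-- `F` lists, each in at least one of its two orientations and nothing else, the `1`-based
pairs `(x₁ + 1, x₂ + 1)` of points of `{0, …, 2^n - 1}` with `x₁ ^^^ x₂ = N`. -/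
def IsXorPairing (F : Finset (ℕ × ℕ)) (n N : ℕ) : Prop :=
  (∀ e ∈ F, ∃ x₁ < 2 ^ n, ∃ x₂ < 2 ^ n, x₁ ^^^ x₂ = N ∧ e = (x₁ + 1, x₂ + 1)) ∧
    ∀ x₁ x₂, x₁ < x₂ → x₂ < 2 ^ n → x₁ ^^^ x₂ = N →
      (x₁ + 1, x₂ + 1) ∈ F ∨ (x₂ + 1, x₁ + 1) ∈ F

namespace IsXorPairing

variable {F : Finset (ℕ × ℕ)} {n N : ℕ}

theorem empty : IsXorPairing ∅ n 0 :=
  ⟨by simp, fun _ _ h _ hx => absurd (xor_eq_zero_iff.mp hx) h.ne⟩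

theorem image_Icc (n : ℕ) :
    IsXorPairing ((Finset.Icc 1 (2 ^ n)).image fun k => (k, k + 2 ^ n)) (n + 1) (2 ^ n) := by
  have hP := Nat.pow_succ 2 n
  constructor
  · intro e he
    obtain ⟨k, hk, rfl⟩ := Finset.mem_image.mp he
    rw [Finset.mem_Icc] at hk
    refine ⟨k - 1, by omega, k - 1 + 2 ^ n, by omega, ?_, by ext <;> simp <;> omega⟩
    rw [Nat.xor_add_two_pow (by omega) (by omega), Nat.xor_self, Nat.zero_add]
  · intro x₁ x₂ hlt h₂ hx
    rcases Nat.lt_two_pow_or_exists_eq_add h₂ with h₂ | ⟨y₂, hy₂, rfl⟩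
    · exact absurd hx (Nat.xor_lt_two_pow (hlt.trans h₂) h₂).ne
    rcases Nat.lt_two_pow_or_exists_eq_add (hlt.trans h₂) with h₁ | ⟨y₁, hy₁, rfl⟩
    · rw [Nat.xor_add_two_pow h₁ hy₂, Nat.add_eq_right, xor_eq_zero_iff] at hx
      subst hx
      refine Or.inl (Finset.mem_image.mpr ⟨x₁ + 1, ?_, by simp [Nat.add_right_comm]⟩)
      exact Finset.mem_Icc.mpr ⟨by omega, h₁⟩
    · exact absurd hx (Nat.add_two_pow_xor_add_two_pow hy₁ hy₂ ▸ Nat.xor_lt_two_pow hy₁ hy₂).ne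

theorem mem_or_mem_swap_of_ne (hF : IsXorPairing F n N) {x₁ x₂ : ℕ} (h₁ : x₁ < 2 ^ n)
    (h₂ : x₂ < 2 ^ n) (hx : x₁ ^^^ x₂ = N) (hne : x₁ ≠ x₂) :
    (x₁ + 1, x₂ + 1) ∈ F ∨ (x₂ + 1, x₁ + 1) ∈ F := by
  rcases lt_or_gt_of_ne hne with h | h
  · exact hF.2 x₁ x₂ h h₂ hx
  · exact (hF.2 x₂ x₁ h h₁ (by rwa [Nat.xor_comm])).symm

theorem image_add_two_pow_union (hF : IsXorPairing F n N) (hN : N ≠ 0) :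
    IsXorPairing (F.image (fun e => (e.1 + 2 ^ n, e.2)) ∪ F.image (fun e => (e.1, e.2 + 2 ^ n)))
      (n + 1) (N + 2 ^ n) := by
  have hP := Nat.pow_succ 2 n
  constructor
  · intro e he
    rcases Finset.mem_union.mp he with he | he <;> obtain ⟨_, hp, rfl⟩ := Finset.mem_image.mp he <;>
      obtain ⟨x₁, h₁, x₂, h₂, rfl, rfl⟩ := hF.1 _ hp
    · exact ⟨x₁ + 2 ^ n, by omega, x₂, by omega, Nat.add_two_pow_xor h₁ h₂,
        by simp [Nat.add_right_comm]⟩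
    · exact ⟨x₁, by omega, x₂ + 2 ^ n, by omega, Nat.xor_add_two_pow h₁ h₂,
        by simp [Nat.add_right_comm]⟩
  · intro x₁ x₂ hlt h₂ hx
    rcases Nat.lt_two_pow_or_exists_eq_add h₂ with h₂ | ⟨y₂, hy₂, rfl⟩
    · exact absurd hx (by have := Nat.xor_lt_two_pow (hlt.trans h₂) h₂; omega)
    rcases Nat.lt_two_pow_or_exists_eq_add (hlt.trans h₂) with h₁ | ⟨y₁, hy₁, rfl⟩
    · rw [Nat.xor_add_two_pow h₁ hy₂, Nat.add_right_cancel_iff] at hx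
      have hne : x₁ ≠ y₂ := fun h => hN (by rw [← hx, h, Nat.xor_self])
      refine (hF.mem_or_mem_swap_of_ne h₁ hy₂ hx hne).imp (fun h => ?_) (fun h => ?_)
      · exact Finset.mem_union_right _ (Finset.mem_image.mpr ⟨_, h, by simp [Nat.add_right_comm]⟩)
      · exact Finset.mem_union_left _ (Finset.mem_image.mpr ⟨_, h, by simp [Nat.add_right_comm]⟩)
    · rw [Nat.add_two_pow_xor_add_two_pow hy₁ hy₂] at hx
      exact absurd hx (by have := Nat.xor_lt_two_pow hy₁ hy₂; omega)

theorem union_image_add_two_pow (hF : IsXorPairing F n N) (hN : N < 2 ^ n) :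
    IsXorPairing (F ∪ F.image fun e => (e.1 + 2 ^ n, e.2 + 2 ^ n)) (n + 1) N := by
  have hP := Nat.pow_succ 2 n
  constructor
  · intro e he
    rcases Finset.mem_union.mp he with he | he
    · obtain ⟨x₁, h₁, x₂, h₂, rfl, rfl⟩ := hF.1 _ he
      exact ⟨x₁, by omega, x₂, by omega, rfl, rfl⟩
    · obtain ⟨_, hp, rfl⟩ := Finset.mem_image.mp he
      obtain ⟨x₁, h₁, x₂, h₂, rfl, rfl⟩ := hF.1 _ hp
      exact ⟨x₁ + 2 ^ n, by omega, x₂ + 2 ^ n, by omega, Nat.add_two_pow_xor_add_two_pow h₁ h₂,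
        by simp [Nat.add_right_comm]⟩
  · intro x₁ x₂ hlt h₂ hx
    rcases Nat.lt_two_pow_or_exists_eq_add h₂ with h₂ | ⟨y₂, hy₂, rfl⟩
    · exact (hF.2 x₁ x₂ hlt h₂ hx).imp (Finset.mem_union_left _) (Finset.mem_union_left _)
    rcases Nat.lt_two_pow_or_exists_eq_add (hlt.trans h₂) with h₁ | ⟨y₁, hy₁, rfl⟩
    · rw [Nat.xor_add_two_pow h₁ hy₂] at hx
      omega
    · rw [Nat.add_two_pow_xor_add_two_pow hy₁ hy₂] at hx
      refine (hF.2 y₁ y₂ (by omega) hy₂ hx).imp (fun h => ?_) (fun h => ?_) <;>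
        exact Finset.mem_union_right _ (Finset.mem_image.mpr ⟨_, h, by simp [Nat.add_right_comm]⟩)

end IsXorPairing

theorem isXorPairing_flipSet (m : ℕ) (γ : Fin m → Bool) :
    IsXorPairing (flipSet m γ) m (ofBits γ) := by
  fun_induction flipSet m γ
  case case1 γ =>
    rw [ofBits_eq_zero_iff.mpr fun t => t.elim0]
    exact IsXorPairing.empty
  case case2 γ h =>
    have hN : ofBits γ = 2 ^ 0 := by rw [ofBits, Fin.sum_univ_one, if_pos h]; rfl
    have hF : ({(1, 2)} : Finset (ℕ × ℕ)) =
        (Finset.Icc 1 (2 ^ 0)).image fun k => (k, k + 2 ^ 0) := by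
      decide
    rw [hN, hF]
    exact IsXorPairing.image_Icc 0
  case case3 γ h =>
    rw [ofBits_eq_zero_iff.mpr fun t => by simpa [Fin.fin_one_eq_zero t] using h]
    exact IsXorPairing.empty
  case case4 m γ h =>
    have hN : ofBits γ = 2 ^ (m + 1) := by
      rw [ofBits_succ, h.2, (ofBits_eq_zero_iff (γ := Fin.init γ)).mpr h.1]; simp
    rw [hN]
    exact IsXorPairing.image_Icc (m + 1)
  case case5 m γ hbase _ h ih =>
    have hN : ofBits γ = ofBits (Fin.init γ) + 2 ^ (m + 1) := by
      rw [ofBits_succ, h, Nat.add_comm]; simp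
    have hN0 : ofBits (Fin.init γ) ≠ 0 := fun h0 => hbase ⟨ofBits_eq_zero_iff.mp h0, h⟩
    rw [hN]
    exact ih.image_add_two_pow_union hN0
  case case6 m γ _ _ h ih =>
    have hN : ofBits γ = ofBits (Fin.init γ) := by
      rw [ofBits_succ, Bool.eq_false_iff.mpr h]; simp
    rw [hN]
    exact ih.union_image_add_two_pow (ofBits_lt _)

theorem feasiblePair_of_xor_eq {m x₁ x₂ : ℕ} {γ : Fin m → Bool} (hx : x₁ ^^^ x₂ = ofBits γ) :
    FeasiblePair m γ (x₁ + 1) (x₂ + 1) := by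
  intro t
  have hbit := congrArg (Nat.testBit · t) hx
  simp only [Nat.testBit_xor, testBit_ofBits] at hbit
  simp only [InSeg, Nat.add_sub_cancel, ← hbit]
  -- `FeasiblePair` is stated with the alias `Xor'`, which the `Xor` simp lemmas do not see.
  show Xor _ _ ↔ _
  cases x₁.testBit t <;> cases x₂.testBit t <;> simp

theorem flipSet_correct_general (m : ℕ) (γ : Fin m → Bool) :
    (∀ k₁ k₂ : ℕ, k₁ < k₂ →
      (((k₁, k₂) ∈ flipSet m γ ∨ (k₂, k₁) ∈ flipSet m γ) ↔
        (1 ≤ k₁ ∧ k₂ ≤ 2 ^ m ∧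
          (k₁ - 1) ^^^ (k₂ - 1) = ∑ t : Fin m, (if γ t then 2 ^ (t : ℕ) else 0)))) ∧
    (∀ e ∈ flipSet m γ, FeasiblePair m γ e.1 e.2) := by
  obtain ⟨hsound, hcomplete⟩ := isXorPairing_flipSet m γ
  refine ⟨fun k₁ k₂ hlt => ⟨?_, fun ⟨h₁, h₂, hx⟩ => ?_⟩, fun e he => ?_⟩
  · rintro (he | he) <;> obtain ⟨x₁, h₁, x₂, h₂, hx, he⟩ := hsound _ he <;>
      obtain ⟨rfl, rfl⟩ := Prod.mk.inj he
    · exact ⟨by omega, by omega, hx⟩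
    · exact ⟨by omega, by omega, (Nat.xor_comm _ _).trans hx⟩
  · have := hcomplete (k₁ - 1) (k₂ - 1) (by omega) (by omega) hx
    rwa [Nat.sub_add_cancel h₁, Nat.sub_add_cancel (by omega)] at this
  · obtain ⟨x₁, -, x₂, -, hx, rfl⟩ := hsound e he
    exact feasiblePair_of_xor_eq hx

/-- For `m ≥ 1` and nonzero `γ ∈ {0,1}^m`, the set of pairs produced by the
recursive splitting construction coincides (as a set of unordered pairs) with
`{{k₁, k₂} : (k₁−1) XOR (k₂−1) = Σ_t γ[t]·2^{t−1}}` inside `{1, …, 2^m}`; hence every pair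
generated by Algorithm 2 is feasible, i.e. satisfies all segmental parity check requirements
encoded by `γ`. -/
theorem flipSet_correct (m : ℕ) (hm : 1 ≤ m) (γ : Fin m → Bool)
    (hγ : γ ≠ fun _ => false) :
    (∀ k₁ k₂ : ℕ, k₁ < k₂ →
      (((k₁, k₂) ∈ flipSet m γ ∨ (k₂, k₁) ∈ flipSet m γ) ↔
        (1 ≤ k₁ ∧ k₂ ≤ 2 ^ m ∧
          (k₁ - 1) ^^^ (k₂ - 1) = ∑ t : Fin m, (if γ t then 2 ^ (t : ℕ) else 0)))) ∧
    (∀ e ∈ flipSet m γ, FeasiblePair m γ e.1 e.2) :=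
  flipSet_correct_general m γ
end
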